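/- There is no rank-2 ample vector bundle E on P^2 with c_1(E) = 5 and c_2(E) = 15 whose generic splitting type on lines is O_{P^1}(4) ⊕ O_{P^1}(1). Consequently, any rank-2 ample vector bundle on P^2 with c_1 = 5 and c_2 = 15 restricts on a generic line ℓ as E|_ℓ = O(3) ⊕ O(2). -/

import Mathlib

/-- Abstract data of a rank-2 **ample** vector bundle `E` on `ℙ²`, recorded through its
Chern numbers `c₁, c₂`, its generic splitting type `E|_ℓ = 𝒪(a) ⊕ 𝒪(b)` (`a ≥ b`) on
lines, and the classical facts about rank-2 bundles on `ℙ²` used to analyse it: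
ampleness forces both summands of every splitting type to be positive; uniform rank-2
bundles on `ℙ²` either split as a direct sum of line bundles or are a twist `T_{ℙ²}(t)`
of the tangent bundle; and a non-uniform bundle has a jumping line on which the
splitting type is lexicographically larger than the generic one. -/
structure AmpleRankTwoBundleOnP2 where
  /-- `c₁(E)` -/
  c1 : ℤ
  /-- `c₂(E)` -/
  c2 : ℤ
  /-- generic splitting type: `E|_ℓ = 𝒪(a) ⊕ 𝒪(b)` on a generic line `ℓ`, with `a ≥ b` -/
  a : ℤ
  b : ℤ
  a_ge_b : b ≤ a
  sum_eq : a + b = c1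
  /-- ampleness: the summands of the (generic) splitting type are positive -/
  one_le_b : 1 ≤ b
  /-- `E` is uniform: the splitting type is the same on every line `ℓ ⊂ ℙ²` -/
  IsUniform : Prop
  /-- classification of uniform rank-2 bundles on `ℙ²`: either `E = 𝒪(s) ⊕ 𝒪(t)`
  (whence `c₁ = s + t` and `c₂ = s·t`), or `E = T_{ℙ²}(t)` (whence `c₁ = 3 + 2t`
  and `c₂ = 3 + 3t + t²`) -/
  uniform_classification : IsUniform →
    (∃ s t : ℤ, c1 = s + t ∧ c2 = s * t) ∨
    (∃ t : ℤ, c1 = 3 + 2 * t ∧ c2 = 3 + 3 * t + t ^ 2)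
  /-- if `E` is not uniform, there is a (jumping) line on which `E` splits as
  `𝒪(a') ⊕ 𝒪(b')` with `a' ≥ b' ≥ 1` (ampleness), `a' + b' = c₁`, and `(a', b')`
  lexicographically larger than the generic splitting type `(a, b)` -/
  jump_of_not_uniform : ¬IsUniform →
    ∃ a' b' : ℤ, b' ≤ a' ∧ 1 ≤ b' ∧ a' + b' = c1 ∧
      (a < a' ∨ (a = a' ∧ b < b'))

/-!
With `c₁ = 5` the only ample generic splitting types are `(4, 1)` and `(3, 2)`. A generic type
`(c₁ - 1, 1)` admits no lexicographically larger ample type with the same sum, so such a bundle has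
no jumping line and is uniform. Uniform bundles have discriminant `c₁² - 4c₂` a square (for
`𝒪(s) ⊕ 𝒪(t)` it is `(s - t)²`) or `-3` (for `T(t)`), whereas here it is `-35`.
-/

namespace AmpleRankTwoBundleOnP2

theorem isUniform_of_b_eq_one (E : AmpleRankTwoBundleOnP2) (hb : E.b = 1) : E.IsUniform := by
  by_contra hU
  obtain ⟨a', b', -, hb', hsum', hlex⟩ := E.jump_of_not_uniform hU
  have := E.sum_eq
  omega

theorem discriminant_of_isUniform (E : AmpleRankTwoBundleOnP2) (hU : E.IsUniform) :
    (∃ d : ℤ, E.c1 ^ 2 - 4 * E.c2 = d ^ 2) ∨ E.c1 ^ 2 - 4 * E.c2 = -3 := by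
  rcases E.uniform_classification hU with ⟨s, t, hc1, hc2⟩ | ⟨t, hc1, hc2⟩
  · exact Or.inl ⟨s - t, by rw [hc1, hc2]; ring⟩
  · exact Or.inr (by rw [hc1, hc2]; ring)

end AmpleRankTwoBundleOnP2

/-- There is no rank-2 ample vector bundle `E` on `ℙ²` with
`c₁(E) = 5` and `c₂(E) = 15` whose generic splitting type on lines is
`𝒪_{ℙ¹}(4) ⊕ 𝒪_{ℙ¹}(1)`.  Consequently, any rank-2 ample vector bundle on `ℙ²` with
`c₁ = 5` and `c₂ = 15` restricts on a generic line `ℓ` as `E|_ℓ = 𝒪(3) ⊕ 𝒪(2)`. -/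
theorem no_ample_rank_two_bundle_with_generic_type_four_one
    (E : AmpleRankTwoBundleOnP2) (hc1 : E.c1 = 5) (hc2 : E.c2 = 15) :
    ¬(E.a = 4 ∧ E.b = 1) ∧ (E.a = 3 ∧ E.b = 2) := by
  have not_four_one : ¬(E.a = 4 ∧ E.b = 1) := fun ⟨_, hb⟩ => by
    rcases E.discriminant_of_isUniform (E.isUniform_of_b_eq_one hb) with ⟨d, hd⟩ | hd <;>
      rw [hc1, hc2] at hd
    · nlinarith [sq_nonneg d]
    · norm_num at hd
  have := E.sum_eq
  have := E.a_ge_b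
  have := E.one_le_b
  exact ⟨not_four_one, by omega, by omega⟩
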